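/- The loss-penalty matrix lies in the interior of the dual cones for large α: let E be a set of pairs (i,j), i ≠ j, of indices in {1,…,n} such that every index in {1,…,n} is an endpoint of at least one pair in E, and for each l = (i,j) ∈ E let M_l be a 2×2 complex Hermitian matrix. Define M(α) = Σ_{l=(i,j)∈E} [e_i, e_j](M_l + α·I_2)[e_i, e_j]ᵀ. Then there exists α0 > 0 such that for every α ≥ α0 there exists ε > 0 with tr(H (M(α) − ε·I_n)) ≥ 0 for every H in the parabolic cone C3(E); consequently, since C1 ⊆ C2(E) ⊆ C3(E), the matrix M(α) − ε·I_n also lies in the dual cones of the SOCP cone C2(E) and of the PSD cone C1. -/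

import Mathlib

/-! On the parabolic cone the diagonal of `H` is nonnegative and each off-diagonal entry
`H_ij`, `(i,j) ∈ E`, is controlled by `H_ii + H_jj`. Hence the block of edge `l = (i,j)`
contributes at least `(α - c_l) (H_ii + H_jj)` to `Re tr (H M(α))`, where `c_l = blockBound M_l`
is the sum of the absolute values of the real parameters of `M_l`. For `α ≥ Σ_l c_l + 1`,
summing over the edges gives `Re tr (H M(α)) ≥ Σ_{(i,j) ∈ E} (H_ii + H_jj) ≥ tr H`, the last
step because the edges cover every index; so `ε = 1` works. The SOCP and PSD cones are handled
by `C1 ⊆ C2(E) ⊆ C3(E)`, the first inclusion being the nonnegativity of `2×2` principal minors.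
-/

open Matrix Finset
open scoped ComplexOrder

/-- The `n×n` matrix `[e_i, e_j] A [e_i, e_j]ᵀ`. -/
noncomputable def emb2 {n : ℕ} (i j : Fin n) (A : Matrix (Fin 2) (Fin 2) ℂ) :
    Matrix (Fin n) (Fin n) ℂ :=
  Matrix.single i i (A 0 0) + Matrix.single i j (A 0 1) +
    Matrix.single j i (A 1 0) + Matrix.single j j (A 1 1)

/-- The PSD cone `C1`. -/
def PSDCone (n : ℕ) : Set (Matrix (Fin n) (Fin n) ℂ) := {H | H.PosSemidef}

/-- The SOCP cone `C2(E)`. -/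
def SOCPCone (n : ℕ) (E : Set (Fin n × Fin n)) : Set (Matrix (Fin n) (Fin n) ℂ) :=
  {H | H.IsHermitian ∧ (∀ i, 0 ≤ (H i i).re) ∧
    ∀ e ∈ E, Complex.normSq (H e.1 e.2) ≤ (H e.1 e.1).re * (H e.2 e.2).re}

/-- The parabolic cone `C3(E)`. -/
def ParabolicCone (n : ℕ) (E : Set (Fin n × Fin n)) : Set (Matrix (Fin n) (Fin n) ℂ) :=
  {H | H.IsHermitian ∧ (∀ i, 0 ≤ (H i i).re) ∧
    ∀ e ∈ E, 2 * |(H e.1 e.2).re| ≤ (H e.1 e.1).re + (H e.2 e.2).re ∧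
      2 * |(H e.1 e.2).im| ≤ (H e.1 e.1).re + (H e.2 e.2).re}

theorem Finset.sum_le_sum_endpoints_of_cover {ι M : Type*} [Fintype ι] [DecidableEq ι]
    [AddCommMonoid M] [PartialOrder M] [IsOrderedAddMonoid M] {f : ι → M} (hf : ∀ i, 0 ≤ f i)
    (s : Finset (ι × ι)) (hcover : ∀ i, ∃ e ∈ s, i = e.1 ∨ i = e.2) :
    ∑ i, f i ≤ ∑ e ∈ s, (f e.1 + f e.2) := by
  have hterm : ∀ i (e : ι × ι),
      0 ≤ (if e.1 = i then f i else 0) + (if e.2 = i then f i else 0) := fun i e =>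
    add_nonneg (ite_nonneg (hf i) le_rfl) (ite_nonneg (hf i) le_rfl)
  calc ∑ i, f i
      ≤ ∑ i, ∑ e ∈ s, ((if e.1 = i then f i else 0) + (if e.2 = i then f i else 0)) := by
        refine sum_le_sum fun i _ => ?_
        obtain ⟨e, he, hi⟩ := hcover i
        refine le_trans ?_ (single_le_sum (fun e _ => hterm i e) he)
        rcases hi with rfl | rfl
        · simp only [if_true]
          exact le_add_of_nonneg_right (ite_nonneg (hf _) le_rfl)
        · simp only [if_true]
          exact le_add_of_nonneg_left (ite_nonneg (hf _) le_rfl)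
    _ = ∑ e ∈ s, (f e.1 + f e.2) := by
        rw [sum_comm]
        simp only [sum_add_distrib, sum_ite_eq, mem_univ, if_true]

lemma neg_abs_mul_le_mul_of_abs_le {a b c : ℝ} (h : |b| ≤ c) : -(|a| * c) ≤ a * b :=
  (neg_le_neg (mul_le_mul_of_nonneg_left h (abs_nonneg a))).trans
    (abs_mul a b ▸ neg_abs_le (a * b))

lemma Matrix.IsHermitian.im_apply_self {n : Type*} {A : Matrix n n ℂ} (hA : A.IsHermitian)
    (i : n) : (A i i).im = 0 :=
  Complex.conj_eq_iff_im.mp (hA.apply i i)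

theorem PSDCone_subset_SOCPCone (n : ℕ) (E : Set (Fin n × Fin n)) :
    PSDCone n ⊆ SOCPCone n E := by
  intro H hH
  refine ⟨hH.1, fun i => (Complex.nonneg_iff.mp hH.diag_nonneg).1, fun e _ => ?_⟩
  have hdet := (hH.submatrix ![e.1, e.2]).det_nonneg
  rw [det_fin_two] at hdet
  simp only [submatrix_apply, Matrix.cons_val_zero, Matrix.cons_val_one] at hdet
  rw [← hH.1.apply e.2 e.1, Complex.star_def, Complex.mul_conj] at hdet
  have hre := (Complex.nonneg_iff.mp hdet).1
  simp only [Complex.sub_re, Complex.mul_re, Complex.ofReal_re, hH.1.im_apply_self,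
    mul_zero, sub_zero] at hre
  linarith

theorem SOCPCone_subset_ParabolicCone (n : ℕ) (E : Set (Fin n × Fin n)) :
    SOCPCone n E ⊆ ParabolicCone n E := by
  rintro H ⟨hHerm, hdiag, hsoc⟩
  refine ⟨hHerm, hdiag, fun e he => ?_⟩
  have hx := sq_abs (H e.1 e.2).re
  have hy := sq_abs (H e.1 e.2).im
  have hpq := hsoc e he
  rw [Complex.normSq_apply] at hpq
  have hp := hdiag e.1
  have hq := hdiag e.2
  constructor <;> nlinarith [abs_nonneg (H e.1 e.2).re, abs_nonneg (H e.1 e.2).im,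
    sq_nonneg ((H e.1 e.1).re - (H e.2 e.2).re)]

lemma emb2_add {n : ℕ} (i j : Fin n) (A B : Matrix (Fin 2) (Fin 2) ℂ) :
    emb2 i j (A + B) = emb2 i j A + emb2 i j B := by
  simp only [emb2, Matrix.add_apply, single_add]
  abel

lemma trace_mul_emb2 {n : ℕ} (H : Matrix (Fin n) (Fin n) ℂ) (i j : Fin n)
    (A : Matrix (Fin 2) (Fin 2) ℂ) :
    (H * emb2 i j A).trace = A 0 0 * H i i + A 0 1 * H j i + A 1 0 * H i j + A 1 1 * H j j := by
  simp only [emb2, Matrix.mul_add, trace_add, trace_mul_single, op_smul_eq_mul]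
  ring

lemma re_trace_mul_emb2_smul_one {n : ℕ} (H : Matrix (Fin n) (Fin n) ℂ) (i j : Fin n) (α : ℝ) :
    (H * emb2 i j ((α : ℂ) • 1)).trace.re = α * ((H i i).re + (H j j).re) := by
  simp [trace_mul_emb2, mul_add]

lemma re_trace_mul_emb2 {n : ℕ} {H : Matrix (Fin n) (Fin n) ℂ} (hH : H.IsHermitian)
    {A : Matrix (Fin 2) (Fin 2) ℂ} (hA : A.IsHermitian) (i j : Fin n) :
    (H * emb2 i j A).trace.re = (A 0 0).re * (H i i).re + (A 1 1).re * (H j j).re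
      + 2 * ((A 0 1).re * (H i j).re + (A 0 1).im * (H i j).im) := by
  rw [trace_mul_emb2, ← hH.apply i j, ← hA.apply 0 1]
  simp only [Complex.add_re, Complex.mul_re, Complex.star_def, Complex.conj_re, Complex.conj_im,
    hH.im_apply_self, hA.im_apply_self]
  ring

def blockBound (B : Matrix (Fin 2) (Fin 2) ℂ) : ℝ :=
  |(B 0 0).re| + |(B 1 1).re| + |(B 0 1).re| + |(B 0 1).im|

lemma blockBound_nonneg (B : Matrix (Fin 2) (Fin 2) ℂ) : 0 ≤ blockBound B := by
  unfold blockBound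
  positivity

lemma neg_blockBound_mul_le_re_trace_mul_emb2 {n : ℕ} {E : Set (Fin n × Fin n)}
    {H : Matrix (Fin n) (Fin n) ℂ} (hH : H ∈ ParabolicCone n E) {e : Fin n × Fin n} (he : e ∈ E)
    {B : Matrix (Fin 2) (Fin 2) ℂ} (hB : B.IsHermitian) :
    -(blockBound B * ((H e.1 e.1).re + (H e.2 e.2).re)) ≤ (H * emb2 e.1 e.2 B).trace.re := by
  obtain ⟨hHerm, hdiag, hpar⟩ := hH
  obtain ⟨hx, hy⟩ := hpar e he
  have hp := hdiag e.1
  have hq := hdiag e.2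
  rw [← abs_two, ← abs_mul] at hx hy
  have h00 := neg_abs_mul_le_mul_of_abs_le (a := (B 0 0).re)
    (show |(H e.1 e.1).re| ≤ (H e.1 e.1).re + (H e.2 e.2).re by rw [abs_of_nonneg hp]; linarith)
  have h11 := neg_abs_mul_le_mul_of_abs_le (a := (B 1 1).re)
    (show |(H e.2 e.2).re| ≤ (H e.1 e.1).re + (H e.2 e.2).re by rw [abs_of_nonneg hq]; linarith)
  have hre := neg_abs_mul_le_mul_of_abs_le (a := (B 0 1).re) hx
  have him := neg_abs_mul_le_mul_of_abs_le (a := (B 0 1).im) hy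
  rw [re_trace_mul_emb2 hHerm hB, blockBound]
  linarith

lemma sub_blockBound_mul_le_re_trace_mul_emb2 {n : ℕ} {E : Set (Fin n × Fin n)}
    {H : Matrix (Fin n) (Fin n) ℂ} (hH : H ∈ ParabolicCone n E) {e : Fin n × Fin n} (he : e ∈ E)
    {B : Matrix (Fin 2) (Fin 2) ℂ} (hB : B.IsHermitian) (α : ℝ) :
    (α - blockBound B) * ((H e.1 e.1).re + (H e.2 e.2).re)
      ≤ (H * emb2 e.1 e.2 (B + (α : ℂ) • 1)).trace.re := by
  rw [emb2_add, Matrix.mul_add, trace_add, Complex.add_re, re_trace_mul_emb2_smul_one]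
  linarith [neg_blockBound_mul_le_re_trace_mul_emb2 hH he hB]

noncomputable def lossPenaltyMatrix {n : ℕ} (E : Finset (Fin n × Fin n))
    (Ml : Fin n × Fin n → Matrix (Fin 2) (Fin 2) ℂ) (α : ℝ) : Matrix (Fin n) (Fin n) ℂ :=
  ∑ e ∈ E, emb2 e.1 e.2 (Ml e + (α : ℂ) • 1)

lemma sub_sum_blockBound_mul_le_re_trace_mul_lossPenaltyMatrix {n : ℕ}
    {E : Finset (Fin n × Fin n)} {H : Matrix (Fin n) (Fin n) ℂ} (hH : H ∈ ParabolicCone n E)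
    {Ml : Fin n × Fin n → Matrix (Fin 2) (Fin 2) ℂ} (hMl : ∀ e ∈ E, (Ml e).IsHermitian) (α : ℝ) :
    (α - ∑ e ∈ E, blockBound (Ml e)) * ∑ e ∈ E, ((H e.1 e.1).re + (H e.2 e.2).re)
      ≤ (H * lossPenaltyMatrix E Ml α).trace.re := by
  rw [lossPenaltyMatrix, Matrix.mul_sum, trace_sum, Complex.re_sum, Finset.mul_sum]
  refine sum_le_sum fun e he => le_trans ?_ (sub_blockBound_mul_le_re_trace_mul_emb2 hH he
    (hMl e he) α)
  have hbound := single_le_sum (fun e _ => blockBound_nonneg (Ml e)) he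
  exact mul_le_mul_of_nonneg_right (by linarith) (add_nonneg (hH.2.1 e.1) (hH.2.1 e.2))

theorem re_trace_le_re_trace_mul_lossPenaltyMatrix {n : ℕ} {E : Finset (Fin n × Fin n)}
    (hcover : ∀ i : Fin n, ∃ e ∈ E, i = e.1 ∨ i = e.2)
    {Ml : Fin n × Fin n → Matrix (Fin 2) (Fin 2) ℂ} (hMl : ∀ e ∈ E, (Ml e).IsHermitian)
    {α : ℝ} (hα : ∑ e ∈ E, blockBound (Ml e) + 1 ≤ α)
    {H : Matrix (Fin n) (Fin n) ℂ} (hH : H ∈ ParabolicCone n E) :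
    H.trace.re ≤ (H * lossPenaltyMatrix E Ml α).trace.re := by
  have hdiag := hH.2.1
  have hS : 0 ≤ ∑ e ∈ E, ((H e.1 e.1).re + (H e.2 e.2).re) :=
    sum_nonneg fun e _ => add_nonneg (hdiag e.1) (hdiag e.2)
  calc H.trace.re = ∑ i, (H i i).re := Complex.re_sum _ _
    _ ≤ ∑ e ∈ E, ((H e.1 e.1).re + (H e.2 e.2).re) :=
      sum_le_sum_endpoints_of_cover hdiag E hcover
    _ ≤ (α - ∑ e ∈ E, blockBound (Ml e)) * ∑ e ∈ E, ((H e.1 e.1).re + (H e.2 e.2).re) :=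
      le_mul_of_one_le_left hS (by linarith)
    _ ≤ (H * lossPenaltyMatrix E Ml α).trace.re :=
      sub_sum_blockBound_mul_le_re_trace_mul_lossPenaltyMatrix hH hMl α

theorem lossPenaltyMatrix_interior_dual_general (n : ℕ)
    (E : Finset (Fin n × Fin n))
    (hcover : ∀ i : Fin n, ∃ e ∈ E, i = e.1 ∨ i = e.2)
    (Ml : Fin n × Fin n → Matrix (Fin 2) (Fin 2) ℂ)
    (hMl : ∀ e ∈ E, (Ml e).IsHermitian) :
    ∃ α0 : ℝ, 0 < α0 ∧ ∀ α : ℝ, α0 ≤ α →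
      ∃ ε : ℝ, 0 < ε ∧
        (∀ H ∈ ParabolicCone n ↑E,
          0 ≤ ((H * ((∑ e ∈ E, emb2 e.1 e.2 (Ml e + (α : ℂ) • (1 : Matrix (Fin 2) (Fin 2) ℂ)))
                - (ε : ℂ) • (1 : Matrix (Fin n) (Fin n) ℂ))).trace).re) ∧
        (∀ H ∈ SOCPCone n ↑E,
          0 ≤ ((H * ((∑ e ∈ E, emb2 e.1 e.2 (Ml e + (α : ℂ) • (1 : Matrix (Fin 2) (Fin 2) ℂ)))
                - (ε : ℂ) • (1 : Matrix (Fin n) (Fin n) ℂ))).trace).re) ∧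
        (∀ H ∈ PSDCone n,
          0 ≤ ((H * ((∑ e ∈ E, emb2 e.1 e.2 (Ml e + (α : ℂ) • (1 : Matrix (Fin 2) (Fin 2) ℂ)))
                - (ε : ℂ) • (1 : Matrix (Fin n) (Fin n) ℂ))).trace).re) := by
  refine ⟨∑ e ∈ E, blockBound (Ml e) + 1,
    add_pos_of_nonneg_of_pos (sum_nonneg fun e _ => blockBound_nonneg (Ml e)) one_pos,
    fun α hα => ⟨1, one_pos, ?_⟩⟩
  have hdual : ∀ H ∈ ParabolicCone n E,
      0 ≤ (H * (lossPenaltyMatrix E Ml α - ((1 : ℝ) : ℂ) • 1)).trace.re := fun H hH => by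
    rw [Complex.ofReal_one, one_smul, Matrix.mul_sub, Matrix.mul_one, trace_sub, Complex.sub_re,
      sub_nonneg]
    exact re_trace_le_re_trace_mul_lossPenaltyMatrix hcover hMl hα hH
  exact ⟨hdual, fun H hH => hdual H (SOCPCone_subset_ParabolicCone n E hH),
    fun H hH => hdual H (SOCPCone_subset_ParabolicCone n E (PSDCone_subset_SOCPCone n E hH))⟩

/-- For an edge set covering all indices and Hermitian `2×2` blocks `M_l`, the matrix
`M(α) = Σ_{l=(i,j)∈E} [e_i,e_j](M_l + α·I₂)[e_i,e_j]ᵀ` lies, for all sufficiently large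
`α`, in the interior of the dual of the parabolic cone `C3(E)` — i.e. `M(α) − ε·I` is in
the dual cone of `C3(E)` for some `ε > 0` — and hence also in the duals of the SOCP cone
`C2(E)` and of the PSD cone `C1`. -/
theorem lossPenaltyMatrix_interior_dual (n : ℕ) (hn : 1 ≤ n)
    (E : Finset (Fin n × Fin n))
    (hE : ∀ e ∈ E, e.1 ≠ e.2)
    (hcover : ∀ i : Fin n, ∃ e ∈ E, i = e.1 ∨ i = e.2)
    (Ml : Fin n × Fin n → Matrix (Fin 2) (Fin 2) ℂ)
    (hMl : ∀ e ∈ E, (Ml e).IsHermitian) :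
    ∃ α0 : ℝ, 0 < α0 ∧ ∀ α : ℝ, α0 ≤ α →
      ∃ ε : ℝ, 0 < ε ∧
        (∀ H ∈ ParabolicCone n ↑E,
          0 ≤ ((H * ((∑ e ∈ E, emb2 e.1 e.2 (Ml e + (α : ℂ) • (1 : Matrix (Fin 2) (Fin 2) ℂ)))
                - (ε : ℂ) • (1 : Matrix (Fin n) (Fin n) ℂ))).trace).re) ∧
        (∀ H ∈ SOCPCone n ↑E,
          0 ≤ ((H * ((∑ e ∈ E, emb2 e.1 e.2 (Ml e + (α : ℂ) • (1 : Matrix (Fin 2) (Fin 2) ℂ)))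
                - (ε : ℂ) • (1 : Matrix (Fin n) (Fin n) ℂ))).trace).re) ∧
        (∀ H ∈ PSDCone n,
          0 ≤ ((H * ((∑ e ∈ E, emb2 e.1 e.2 (Ml e + (α : ℂ) • (1 : Matrix (Fin 2) (Fin 2) ℂ)))
                - (ε : ℂ) • (1 : Matrix (Fin n) (Fin n) ℂ))).trace).re) :=
  lossPenaltyMatrix_interior_dual_general n E hcover Ml hMl
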